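/- Let G ≤ GL₃(R) contain all elementary matrices, H ⊴ G be normal of finite index with H solvable of derived length n, and let I = { r ∈ R : t_{ij}(r) ∈ H for all i ≠ j }. Then any product of 2^n elements of I is zero; in particular I is a nilpotent two-sided ideal of R of finite additive index, so R is nilpotent-by-finite. -/

import Mathlib

/-!
Write `t_ij(r)` for the elementary matrices. In dimension at least three every index pair `i ≠ j`
has a third index `c`, and `⁅t_ic(a), t_cj(b)⁆ = t_ij(ab)`. By induction on `k`, a product of
`2 ^ k` elements of `I` therefore gives elementary matrices `t_ij(r₁ ⋯ r_{2^k})` lying in the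
`k`-th derived subgroup of `H`; for `k = n` that subgroup is trivial, so the product vanishes.
The additive group `I` is the intersection of the preimages of `H` under the homomorphisms
`r ↦ t_ij(r)` from `R` to `G`, hence has finite index in `R`.
-/

open scoped commutatorElement

/-- The elementary matrix `t_{ij}(r) = 1 + r·E_{ij}`. -/
def elemMat {R : Type*} [Ring R] (i j : Fin 3) (r : R) : Matrix (Fin 3) (Fin 3) R :=
  1 + Matrix.single i j r

section ElementaryUnits

variable {n R : Type*} [Fintype n] [DecidableEq n] [Ring R]

open Matrix

lemma one_add_single_mul_one_add_single {i j : n} (hij : i ≠ j) (r s : R) :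
    (1 + single i j r) * (1 + single i j s) = 1 + single i j (r + s) := by
  simp only [mul_add, mul_one, add_mul, one_mul, single_mul_single_of_ne _ _ _ _ hij.symm,
    add_zero, single_add]
  abel

def elemUnit (i j : n) (hij : i ≠ j) (r : R) : (Matrix n n R)ˣ where
  val := 1 + single i j r
  inv := 1 + single i j (-r)
  val_inv := by simp [one_add_single_mul_one_add_single hij]
  inv_val := by simp [one_add_single_mul_one_add_single hij]

variable {i j : n} (hij : i ≠ j)

@[simp] lemma val_elemUnit (r : R) : (elemUnit i j hij r : Matrix n n R) = 1 + single i j r := rfl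

lemma elemUnit_add (r s : R) :
    elemUnit i j hij (r + s) = elemUnit i j hij r * elemUnit i j hij s :=
  Units.ext (one_add_single_mul_one_add_single hij r s).symm

lemma elemUnit_eq_one_iff {r : R} : elemUnit i j hij r = 1 ↔ r = 0 := by
  refine ⟨fun h => ?_, fun h => Units.ext (by simp [h])⟩
  have hsingle : single i j r = 0 := by simpa using congrArg Units.val h
  simpa using congrFun (congrFun hsingle i) j

def elemAddHom : R →+ Additive (Matrix n n R)ˣ where
  toFun r := Additive.ofMul (elemUnit i j hij r)
  map_zero' := by simp [(elemUnit_eq_one_iff hij).2 rfl]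
  map_add' r s := by simp [elemUnit_add hij]

lemma commutatorElement_elemUnit {c : n} (hic : i ≠ c) (hcj : c ≠ j) (a b : R) :
    ⁅elemUnit i c hic a, elemUnit c j hcj b⁆ = elemUnit i j hij (a * b) := by
  have hcommute : elemUnit i j hij (a * b) * elemUnit c j hcj b * elemUnit i c hic a
      = elemUnit i c hic a * elemUnit c j hcj b := by
    ext1
    simp only [Units.val_mul, val_elemUnit, mul_add, mul_one, add_mul, one_mul,
      single_mul_single_of_ne _ _ _ _ hcj.symm, single_mul_single_of_ne _ _ _ _ hij.symm,
      single_mul_single_same, add_zero]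
    abel
  rw [commutatorElement_def, ← hcommute]
  group

end ElementaryUnits

section Level

variable {n R : Type*} [Fintype n] [DecidableEq n] [Ring R]

def elemLevel (H : Subgroup (Matrix n n R)ˣ) : AddSubgroup R :=
  ⨅ ij : {ij : n × n // ij.1 ≠ ij.2}, (Subgroup.toAddSubgroup H).comap (elemAddHom ij.2)

variable {H : Subgroup (Matrix n n R)ˣ}

lemma mem_elemLevel {r : R} :
    r ∈ elemLevel H ↔ ∀ (i j : n) (hij : i ≠ j), elemUnit i j hij r ∈ H := by
  simp [elemLevel, AddSubgroup.mem_iInf, elemAddHom]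

lemma elemLevel_index_ne_zero {G : Subgroup (Matrix n n R)ˣ}
    (hG : ∀ (i j : n) (hij : i ≠ j) (r : R), elemUnit i j hij r ∈ G) (hHG : H.relIndex G ≠ 0) :
    (elemLevel H).index ≠ 0 := by
  refine AddSubgroup.index_iInf_ne_zero fun ⟨(i, j), hij⟩ => ?_
  rw [← Subgroup.relIndex_toAddSubgroup] at hHG
  rw [AddSubgroup.index_comap]
  refine mt (AddSubgroup.relIndex_eq_zero_of_le_right ?_) hHG
  rintro _ ⟨r, rfl⟩
  exact hG i j hij r

end Level

lemma AddSubgroup.exists_finset_sub_mem_of_index_ne_zero {A : Type*} [AddCommGroup A]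
    (S : AddSubgroup A) (hS : S.index ≠ 0) : ∃ T : Finset A, ∀ a, ∃ t ∈ T, a - t ∈ S := by
  have : S.FiniteIndex := ⟨hS⟩
  have hreps := Set.finite_range fun q : A ⧸ S => q.out
  refine ⟨hreps.toFinset, fun a => ⟨(a : A ⧸ S).out, hreps.mem_toFinset.mpr ⟨_, rfl⟩, ?_⟩⟩
  rw [sub_eq_neg_add, ← QuotientAddGroup.eq, QuotientAddGroup.out_eq']

section Solvable

variable {n R : Type*} [Fintype n] [DecidableEq n] [Ring R] {H : Subgroup (Matrix n n R)ˣ}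

lemma elemUnit_list_prod_mem_map_derivedSeries (hn : 3 ≤ ENat.card n) (k : ℕ) {l : List R}
    (hl : l.length = 2 ^ k) (hlH : ∀ r ∈ l, r ∈ elemLevel H) {i j : n} (hij : i ≠ j) :
    elemUnit i j hij l.prod ∈ (derivedSeries H k).map H.subtype := by
  induction k generalizing l i j with
  | zero =>
    obtain ⟨r, rfl⟩ := List.length_eq_one_iff.mp hl
    simpa using mem_elemLevel.mp (hlH r (by simp)) i j hij
  | succ k ih =>
    obtain ⟨c, hci, hcj⟩ := ENat.exists_ne_ne_of_three_le hn i j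
    have hfirst : (l.take (2 ^ k)).length = 2 ^ k := by simp [hl, pow_succ]
    have hlast : (l.drop (2 ^ k)).length = 2 ^ k := by rw [List.length_drop, hl, pow_succ]; omega
    rw [← List.take_append_drop (2 ^ k) l, List.prod_append,
      ← commutatorElement_elemUnit hij hci.symm hcj, derivedSeries_succ, Subgroup.map_commutator]
    exact Subgroup.commutator_mem_commutator
      (ih hfirst (fun r hr => hlH r (List.mem_of_mem_take hr)) hci.symm)
      (ih hlast (fun r hr => hlH r (List.mem_of_mem_drop hr)) hcj)

lemma list_prod_eq_zero_of_derivedSeries_eq_bot (hn : 3 ≤ ENat.card n) {k : ℕ}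
    (hH : derivedSeries H k = ⊥) {l : List R} (hl : l.length = 2 ^ k)
    (hlH : ∀ r ∈ l, r ∈ elemLevel H) : l.prod = 0 := by
  have : Nontrivial n := (ENat.one_lt_card_iff_nontrivial n).mp (lt_of_lt_of_le (by norm_num) hn)
  obtain ⟨i, j, hij⟩ := exists_pair_ne n
  have hmem := elemUnit_list_prod_mem_map_derivedSeries hn k hl hlH hij
  rwa [hH, Subgroup.map_bot, Subgroup.mem_bot, elemUnit_eq_one_iff] at hmem

end Solvable

theorem ring_nilpotent_by_finite_of_solvable_general {R : Type*} [Ring R] (n : ℕ)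
    (G H : Subgroup (Matrix (Fin 3) (Fin 3) R)ˣ)
    (hfin : H.relIndex G ≠ 0)
    (hsolv : derivedSeries (↥H) n = ⊥)
    (hG : ∀ (i j : Fin 3), i ≠ j → ∀ r : R, ∀ u : (Matrix (Fin 3) (Fin 3) R)ˣ,
      u.val = elemMat i j r → u ∈ G)
    (I : Set R)
    (hI : I = { r : R | ∀ (i j : Fin 3), i ≠ j →
      ∀ u : (Matrix (Fin 3) (Fin 3) R)ˣ, u.val = elemMat i j r → u ∈ H }) :
    (∀ l : List R, l.length = 2 ^ n → (∀ r ∈ l, r ∈ I) → l.prod = 0) ∧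
    (∃ T : Finset R, ∀ r : R, ∃ t ∈ T, r - t ∈ I) := by
  have hthree : 3 ≤ ENat.card (Fin 3) := by simp
  have hI_eq : I = elemLevel H := by
    ext r
    rw [hI, SetLike.mem_coe, mem_elemLevel]
    exact ⟨fun h i j hij => h i j hij _ rfl,
      fun h i j hij u hu => (Units.ext hu : u = elemUnit i j hij r) ▸ h i j hij⟩
  have hGelem : ∀ (i j : Fin 3) (hij : i ≠ j) (r : R), elemUnit i j hij r ∈ G :=
    fun i j hij r => hG i j hij r _ rfl
  subst hI_eq
  exact ⟨fun l hl hlI => list_prod_eq_zero_of_derivedSeries_eq_bot hthree hsolv hl hlI,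
    (elemLevel H).exists_finset_sub_mem_of_index_ne_zero (elemLevel_index_ne_zero hGelem hfin)⟩

/-- Let `G ≤ GL₃(R)` contain all elementary matrices, `H ⊴ G` normal of finite index
with `H` solvable of derived length `n` (its `n`-th derived subgroup is trivial), and
`I = { r : t_{ij}(r) ∈ H for all i ≠ j }`. Then any product of `2^n` elements of `I`
is zero; in particular `I` is a nilpotent ideal of finite additive index, so `R` is
nilpotent-by-finite. -/
theorem ring_nilpotent_by_finite_of_solvable {R : Type*} [Ring R] (n : ℕ)
    (G H : Subgroup (Matrix (Fin 3) (Fin 3) R)ˣ) (hHG : H ≤ G)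
    (hnorm : ∀ g ∈ G, ∀ h ∈ H, g⁻¹ * h * g ∈ H)
    (hfin : H.relIndex G ≠ 0)
    (hsolv : derivedSeries (↥H) n = ⊥)
    (hG : ∀ (i j : Fin 3), i ≠ j → ∀ r : R, ∀ u : (Matrix (Fin 3) (Fin 3) R)ˣ,
      u.val = elemMat i j r → u ∈ G)
    (I : Set R)
    (hI : I = { r : R | ∀ (i j : Fin 3), i ≠ j →
      ∀ u : (Matrix (Fin 3) (Fin 3) R)ˣ, u.val = elemMat i j r → u ∈ H }) :
    (∀ l : List R, l.length = 2 ^ n → (∀ r ∈ l, r ∈ I) → l.prod = 0) ∧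
    (∃ T : Finset R, ∀ r : R, ∃ t ∈ T, r - t ∈ I) :=
  ring_nilpotent_by_finite_of_solvable_general n G H hfin hsolv hG I hI
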